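/- arXiv:0711.1391 — 2 statements merged into one kernel-verified Lean document; each statement's English description precedes it below -/
import Mathlib

section
/- Fix a reduced expression w = w_1 w_2 ... w_k for an element w of a Coxeter group W and a binary mask σ ∈ {0,1}^k. Then l(w) − l(w^σ) − 2·d(σ) = D(σ), where w^σ is the subword product determined by σ, d(σ) is the number of defect positions (positions j ≥ 2 with l(w^{σ[j−1]} w_j) < l(w^{σ[j−1]})), and D(σ) = (number of plain-zeros of σ) − (number of zero-defects of σ). -/
open CoxeterSystem Polynomial

variable {B W : Type*} [Group W] {M : CoxeterMatrix B}

namespace DeodharMu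

noncomputable section

/-- The subword of `ω` selected by the positions where the mask `σ` is `true`. -/
def maskedWord (ω : List B) (σ : List Bool) : List B :=
  ((ω.zip σ).filter (·.2)).map (·.1)

/-- The subword product `w^σ` determined by a mask `σ`. -/
def maskProd (cs : CoxeterSystem M W) (ω : List B) (σ : List Bool) : W :=
  cs.wordProd (maskedWord ω σ)

/-- Position `j` (0-indexed) of `ω` is a defect with respect to the mask `σ`:
multiplying the initial subword product `w^{σ[j-1]}` by the letter `ω_j` decreases length. -/
def IsDefect (cs : CoxeterSystem M W) (ω : List B) (σ : List Bool) (j : ℕ) : Prop :=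
  cs.length (maskProd cs (ω.take (j + 1)) (σ.take j ++ [true])) <
    cs.length (maskProd cs (ω.take j) (σ.take j))

instance (cs : CoxeterSystem M W) (ω : List B) (σ : List Bool) :
    DecidablePred (IsDefect cs ω σ) := fun _ => Nat.decLt _ _

/-- The number of defects `d(σ)`. -/
def defectCount (cs : CoxeterSystem M W) (ω : List B) (σ : List Bool) : ℕ :=
  ((Finset.range ω.length).filter (IsDefect cs ω σ)).card

/-- The number of zero-defects: positions with mask-value 0 that are defects. -/
def zeroDefectCount (cs : CoxeterSystem M W) (ω : List B) (σ : List Bool) : ℕ :=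
  ((Finset.range ω.length).filter
    (fun j => σ.getD j true = false ∧ IsDefect cs ω σ j)).card

/-- The number of plain-zeros: positions with mask-value 0 that are not defects. -/
def plainZeroCount (cs : CoxeterSystem M W) (ω : List B) (σ : List Bool) : ℕ :=
  ((Finset.range ω.length).filter
    (fun j => σ.getD j true = false ∧ ¬ IsDefect cs ω σ j)).card

/-- The Deodhar statistic `D(σ) = #plain-zeros − #zero-defects`. -/
def Dstat (cs : CoxeterSystem M W) (ω : List B) (σ : List Bool) : ℤ :=
  (plainZeroCount cs ω σ : ℤ) - zeroDefectCount cs ω σ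

/-- A mask is proper if it is not the all-ones mask. -/
def IsProperMask (ω : List B) (σ : List Bool) : Prop :=
  σ.length = ω.length ∧ σ ≠ List.replicate ω.length true

/-- A μ-mask: a proper mask with Deodhar statistic `D(σ) = 1`. -/
def IsMuMask (cs : CoxeterSystem M W) (ω : List B) (σ : List Bool) : Prop :=
  IsProperMask ω σ ∧ Dstat cs ω σ = 1

/-- A reduced word is Deodhar if every proper mask on it has positive Deodhar statistic. -/
def IsDeodharWord (cs : CoxeterSystem M W) (ω : List B) : Prop :=
  ∀ σ : List Bool, IsProperMask ω σ → 0 < Dstat cs ω σ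

/-- An element is Deodhar if every reduced expression for it is a Deodhar word. -/
def IsDeodhar (cs : CoxeterSystem M W) (w : W) : Prop :=
  ∀ ω : List B, cs.IsReduced ω → cs.wordProd ω = w → IsDeodharWord cs ω

/-- Bruhat order via the subword property: `x ≤ w` iff `x` is the product of a subword of
some (equivalently any) reduced expression for `w`. -/
def bruhatLE (cs : CoxeterSystem M W) (x w : W) : Prop :=
  ∃ (ω : List B) (σ : List Bool), cs.IsReduced ω ∧ cs.wordProd ω = w ∧
    σ.length = ω.length ∧ maskProd cs ω σ = x

/-- Strict Bruhat order. -/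
def bruhatLT (cs : CoxeterSystem M W) (x w : W) : Prop :=
  bruhatLE cs x w ∧ x ≠ w

/-- The prototype polynomial `P_x(q) = Σ_{σ : w^σ = x} q^{d(σ)}`. -/
def Ppoly [DecidableEq W] (cs : CoxeterSystem M W) (ω : List B) (x : W) : Polynomial ℤ :=
  ∑ m : Fin ω.length → Bool,
    if maskProd cs ω (List.ofFn m) = x then (Polynomial.X : Polynomial ℤ) ^ defectCount cs ω (List.ofFn m) else 0

/-- The μ-coefficient of a family `P` of polynomials: the coefficient of
`q^{(l(w)-l(x)-1)/2}`, taken to be zero when this exponent is not a nonnegative integer. -/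
def mu (cs : CoxeterSystem M W) (P : W → W → Polynomial ℤ) (x w : W) : ℤ :=
  if cs.length x < cs.length w ∧ (cs.length w - cs.length x) % 2 = 1 then
    (P x w).coeff ((cs.length w - cs.length x - 1) / 2)
  else 0

/-- A single commutation move: interchange two adjacent commuting generators. -/
def CommMove (M : CoxeterMatrix B) (ω ω' : List B) : Prop :=
  ∃ (l₁ l₂ : List B) (s t : B), M s t = 2 ∧ ω = l₁ ++ [s, t] ++ l₂ ∧ ω' = l₁ ++ [t, s] ++ l₂

/-- An element is fully commutative if any two of its reduced expressions are related
by a sequence of commutation moves. -/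
def FullyCommutative (cs : CoxeterSystem M W) (w : W) : Prop :=
  ∀ ω ω' : List B, cs.IsReduced ω → cs.wordProd ω = w → cs.IsReduced ω' → cs.wordProd ω' = w →
    Relation.ReflTransGen (CommMove M) ω ω'

/-- A word contains a short-braid: a consecutive factor `s t s` with `m(s,t) ≥ 3`. -/
def HasShortBraid (M : CoxeterMatrix B) (ω : List B) : Prop :=
  ∃ (l₁ l₂ : List B) (s t : B), 3 ≤ M s t ∧ ω = l₁ ++ [s, t, s] ++ l₂

/-- An element is short-braid avoiding if no reduced expression for it contains a
factor `s t s` with `s`, `t` non-commuting generators. -/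
def ShortBraidAvoiding (cs : CoxeterSystem M W) (w : W) : Prop :=
  ∀ ω : List B, cs.IsReduced ω → cs.wordProd ω = w → ¬ HasShortBraid M ω

/-- The heap partial order on positions of a word: the transitive closure of
`i ⋖ j` when `i < j` and the letters at `i` and `j` do not commute. -/
def HeapLT (cs : CoxeterSystem M W) (ω : List B) (i j : Fin ω.length) : Prop :=
  Relation.TransGen
    (fun i j : Fin ω.length => (i : ℕ) < (j : ℕ) ∧
      ¬ Commute (cs.simple (ω.get i)) (cs.simple (ω.get j))) i j

/-- Remove from a list the entries whose (0-indexed) positions lie in `J`. -/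
def removeIdx {α : Type*} (l : List α) (J : Finset ℕ) : List α :=
  (l.zipIdx.filter (fun p => p.2 ∉ J)).map Prod.fst

end

end DeodharMu

/-!
Read the word from left to right. At a position with mask value `1` the length of the running
subword product drops by one exactly at a defect and rises by one otherwise, so
`1 - Δl - 2·[defect]` vanishes there; at a position with mask value `0` the product is
unchanged and the same quantity is `+1` at a plain-zero and `-1` at a zero-defect.
Summing over the positions gives `k - l(w^σ) - 2 d(σ) = D(σ)`, and `k = l(w)` as the
expression is reduced.
-/

lemma Finset.card_filter_range_succ_of_iff (n : ℕ) (p q : ℕ → Prop)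
    [DecidablePred p] [DecidablePred q] (h : ∀ j < n, p j ↔ q j) :
    ((Finset.range (n + 1)).filter p).card =
      ((Finset.range n).filter q).card + if p n then 1 else 0 := by
  rw [Finset.card_filter, Finset.card_filter, Finset.sum_range_succ]
  congr 1
  exact Finset.sum_congr rfl fun j hj => if_congr (h j (Finset.mem_range.mp hj)) rfl rfl

namespace DeodharMu

section AppendSingleton

variable (cs : CoxeterSystem M W) {ω : List B} {σ : List Bool} (a : B) (b : Bool)

lemma maskProd_append_singleton (h : σ.length = ω.length) :
    maskProd cs (ω ++ [a]) (σ ++ [b]) = maskProd cs ω σ * if b then cs.simple a else 1 := by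
  unfold maskProd maskedWord
  rw [List.zip_append h.symm, List.filter_append, List.map_append, cs.wordProd_append]
  cases b <;> simp [CoxeterSystem.wordProd]

lemma isDefect_append_singleton_of_lt (h : σ.length = ω.length) {j : ℕ} (hj : j < ω.length) :
    IsDefect cs (ω ++ [a]) (σ ++ [b]) j ↔ IsDefect cs ω σ j := by
  unfold IsDefect
  rw [List.take_append_of_le_length (by omega), List.take_append_of_le_length (by omega),
    List.take_append_of_le_length (by omega)]

lemma isDefect_append_singleton_length_iff (h : σ.length = ω.length) :
    IsDefect cs (ω ++ [a]) (σ ++ [b]) ω.length ↔ cs.IsRightDescent (maskProd cs ω σ) a := by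
  unfold IsDefect CoxeterSystem.IsRightDescent
  rw [List.take_of_length_le (by simp), List.take_left, ← h, List.take_left,
    maskProd_append_singleton cs a true h, if_pos rfl]

lemma defectCount_append_singleton (h : σ.length = ω.length) :
    defectCount cs (ω ++ [a]) (σ ++ [b]) =
      defectCount cs ω σ + if IsDefect cs (ω ++ [a]) (σ ++ [b]) ω.length then 1 else 0 := by
  unfold defectCount
  rw [List.length_append, List.length_singleton]
  exact Finset.card_filter_range_succ_of_iff _ _ _ fun j hj =>
    isDefect_append_singleton_of_lt cs a b h hj

lemma zeroDefectCount_append_singleton (h : σ.length = ω.length) :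
    zeroDefectCount cs (ω ++ [a]) (σ ++ [b]) = zeroDefectCount cs ω σ +
      if b = false ∧ IsDefect cs (ω ++ [a]) (σ ++ [b]) ω.length then 1 else 0 := by
  unfold zeroDefectCount
  rw [List.length_append, List.length_singleton,
    Finset.card_filter_range_succ_of_iff _ _ _ fun j hj => by
      rw [List.getD_append _ _ _ _ (h ▸ hj), isDefect_append_singleton_of_lt cs a b h hj]]
  simp [← h]

lemma plainZeroCount_append_singleton (h : σ.length = ω.length) :
    plainZeroCount cs (ω ++ [a]) (σ ++ [b]) = plainZeroCount cs ω σ +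
      if b = false ∧ ¬ IsDefect cs (ω ++ [a]) (σ ++ [b]) ω.length then 1 else 0 := by
  unfold plainZeroCount
  rw [List.length_append, List.length_singleton,
    Finset.card_filter_range_succ_of_iff _ _ _ fun j hj => by
      rw [List.getD_append _ _ _ _ (h ▸ hj), isDefect_append_singleton_of_lt cs a b h hj]]
  simp [← h]

end AppendSingleton

theorem length_sub_length_maskProd_sub_two_mul_defectCount (cs : CoxeterSystem M W)
    (ω : List B) (σ : List Bool) (hlen : σ.length = ω.length) :
    (ω.length : ℤ) - cs.length (maskProd cs ω σ) - 2 * defectCount cs ω σ = Dstat cs ω σ := by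
  induction ω using List.reverseRecOn generalizing σ with
  | nil =>
    rw [List.length_eq_zero_iff.mp hlen]
    simp [maskProd, maskedWord, defectCount, Dstat, plainZeroCount, zeroDefectCount]
  | append_singleton ω a ih =>
    obtain ⟨τ, b, rfl⟩ : ∃ τ b, σ = τ ++ [b] :=
      ⟨σ.dropLast, σ.getLast (List.ne_nil_of_length_pos (by simp [hlen])),
        (List.dropLast_append_getLast _).symm⟩
    have hτ : τ.length = ω.length := by simpa using hlen
    have ih := ih τ hτ
    unfold Dstat at ih ⊢
    rw [defectCount_append_singleton cs a b hτ, zeroDefectCount_append_singleton cs a b hτ,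
      plainZeroCount_append_singleton cs a b hτ, maskProd_append_singleton cs a b hτ,
      List.length_append, List.length_singleton]
    by_cases hD : cs.IsRightDescent (maskProd cs ω τ) a
    · have hl := cs.isRightDescent_iff.mp hD
      cases b <;> simp [isDefect_append_singleton_length_iff cs a _ hτ, hD] <;> omega
    · have hl := cs.not_isRightDescent_iff.mp hD
      cases b <;> simp [isDefect_append_singleton_length_iff cs a _ hτ, hD] <;> omega

end DeodharMu

open DeodharMu in
theorem stmt0 (cs : CoxeterSystem M W) (ω : List B) (σ : List Bool)
    (hred : cs.IsReduced ω) (hlen : σ.length = ω.length) :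
    (cs.length (cs.wordProd ω) : ℤ) - cs.length (maskProd cs ω σ) - 2 * defectCount cs ω σ =
      Dstat cs ω σ := by
  rw [hred]
  exact length_sub_length_maskProd_sub_two_mul_defectCount cs ω σ hlen
end

section
/- Let w be a fully commutative element of a Coxeter group with reduced expression w_1...w_k, and suppose positions p < q correspond to the same generator s (w_p = w_q = s) and form a minimal pair (no position between them uses s). Then there exist at least two positions strictly between p and q in the heap order whose generators do not commute with s, and moreover these two generators occupy distinct columns (are distinct generators) when w is fully commutative in type A. -/
open CoxeterSystem Polynomial

variable {B W : Type*} [Group W] {M : CoxeterMatrix B}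

/-!
Let `a = ω_p = ω_q`. If every letter strictly between `p` and `q` commutes with `a`, the two
copies of `a` cancel and `ω` is not reduced. If exactly one letter `t` between them fails to
commute with `a`, then `m(a, t) = 3` and the braid relation turns `a … t … a` into
`… t a t …`: a reduced word for `w` with one letter `a` fewer, which cannot be reached by
commutation moves. So at least two letters between `p` and `q` do not commute with `a`. In
type `A` they can be chosen distinct: if two of them were the same neighbour `t` of `a`, they
would enclose a minimal pair of `t`, hence, inductively, both neighbours of `t`, one of which
is `a`.
-/

open DeodharMu CoxeterSystem

namespace List

variable {α : Type*}

def IsMinimalPair (l : List α) (p q : Fin l.length) : Prop :=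
  p < q ∧ l.get p = l.get q ∧ ∀ r, p < r → r < q → l.get r ≠ l.get p

theorem exists_isMinimalPair_of_get_eq (l : List α) {i j : Fin l.length} (hij : i < j)
    (h : l.get i = l.get j) : ∃ i', i ≤ i' ∧ l.IsMinimalPair i' j := by
  classical
  set S := Finset.univ.filter fun k : Fin l.length => k < j ∧ l.get k = l.get j
  have hiS : i ∈ S := Finset.mem_filter.mpr ⟨Finset.mem_univ _, hij, h⟩
  obtain ⟨hi'j, hi'⟩ := (Finset.mem_filter.mp (S.max'_mem ⟨i, hiS⟩)).2
  refine ⟨S.max' ⟨i, hiS⟩, S.le_max' i hiS, hi'j, hi', fun r hr hrj hr' => ?_⟩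
  have hrS : r ∈ S := Finset.mem_filter.mpr ⟨Finset.mem_univ _, hrj, hr'.trans hi'⟩
  exact (S.le_max' r hrS).not_gt hr

theorem drop_eq_take_append_getElem_cons (l : List α) {i j : ℕ} (hij : i ≤ j)
    (hj : j < l.length) : l.drop i = (l.drop i).take (j - i) ++ l[j] :: l.drop (j + 1) := by
  conv_lhs => rw [← List.take_append_drop (j - i) (l.drop i)]
  rw [List.drop_drop, Nat.add_sub_cancel' hij, List.drop_eq_getElem_cons hj]

theorem forall_mem_take_drop {P : α → Prop} {l : List α} {i k : ℕ}
    (h : ∀ j : Fin l.length, i ≤ j → j < i + k → P (l.get j)) :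
    ∀ b ∈ (l.drop i).take k, P b := by
  intro b hb
  obtain ⟨m, hm, rfl⟩ := List.mem_iff_getElem.mp hb
  simp only [List.length_take, List.length_drop] at hm
  simpa using h ⟨i + m, by omega⟩ (Nat.le_add_right i m) (by simp only; omega)

end List

theorem CoxeterMatrix.A_apply_of_ne {n : ℕ} {a b : Fin n} (hab : a ≠ b) :
    CoxeterMatrix.A n a b = if (b : ℕ) + 1 = a ∨ (a : ℕ) + 1 = b then 3 else 2 := by
  simp [CoxeterMatrix.A, hab]

namespace CoxeterSystem

section General

variable (cs : CoxeterSystem M W)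

theorem commute_simple_wordProd {a : B} {l : List B}
    (h : ∀ b ∈ l, Commute (cs.simple a) (cs.simple b)) :
    Commute (cs.simple a) (cs.wordProd l) :=
  Commute.list_prod_right _ _ (List.forall_mem_map.mpr h)

theorem commute_simple_of_M_eq_two {a b : B} (h : M a b = 2) :
    Commute (cs.simple a) (cs.simple b) := by
  have h1 := cs.simple_mul_simple_pow a b
  rw [h, sq] at h1
  have h2 := eq_inv_of_mul_eq_one_left h1
  rwa [mul_inv_rev, cs.inv_simple, cs.inv_simple] at h2

theorem simple_braid_of_M_eq_three {a t : B} (h : M a t = 3) :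
    cs.simple a * cs.simple t * cs.simple a = cs.simple t * cs.simple a * cs.simple t := by
  have h1 : cs.simple a * cs.simple t * cs.simple a *
      (cs.simple t * cs.simple a * cs.simple t) = 1 := by
    simpa [h, pow_succ, mul_assoc] using cs.simple_mul_simple_pow a t
  simpa [mul_assoc, cs.inv_simple] using eq_inv_of_mul_eq_one_left h1

theorem not_isReduced_of_commute_between {a : B} (l₁ l₂ l₃ : List B)
    (h : ∀ b ∈ l₂, Commute (cs.simple a) (cs.simple b)) :
    ¬ cs.IsReduced (l₁ ++ a :: (l₂ ++ a :: l₃)) := by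
  intro hred
  have hprod : cs.wordProd (l₁ ++ a :: (l₂ ++ a :: l₃)) = cs.wordProd (l₁ ++ (l₂ ++ l₃)) := by
    simp only [wordProd_append, wordProd_cons]
    rw [← mul_assoc (cs.simple a), (cs.commute_simple_wordProd h).eq, mul_assoc,
      simple_mul_simple_cancel_left]
  have hle := cs.length_wordProd_le (l₁ ++ (l₂ ++ l₃))
  rw [← hprod, hred] at hle
  simp only [List.length_append, List.length_cons] at hle
  omega

end General

section TypeA

variable {n : ℕ} (cs : CoxeterSystem (CoxeterMatrix.A n) W)

theorem adjacent_of_not_commute_typeA {a b : Fin n}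
    (h : ¬ Commute (cs.simple a) (cs.simple b)) : (a : ℕ) + 1 = b ∨ (b : ℕ) + 1 = a := by
  by_contra hadj
  obtain rfl | hab := eq_or_ne a b
  · exact h (Commute.refl _)
  · exact h (cs.commute_simple_of_M_eq_two
      (by rw [CoxeterMatrix.A_apply_of_ne hab, if_neg (by omega)]))

theorem eq_three_of_not_commute_typeA {a b : Fin n}
    (h : ¬ Commute (cs.simple a) (cs.simple b)) : CoxeterMatrix.A n a b = 3 := by
  have hab : a ≠ b := by rintro rfl; exact h (Commute.refl _)
  have := cs.adjacent_of_not_commute_typeA h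
  rw [CoxeterMatrix.A_apply_of_ne hab, if_pos (by omega)]

theorem eq_or_eq_of_not_commute_typeA {t a b c : Fin n}
    (ha : ¬ Commute (cs.simple t) (cs.simple a)) (hb : ¬ Commute (cs.simple t) (cs.simple b))
    (hc : ¬ Commute (cs.simple t) (cs.simple c)) (hbc : b ≠ c) : a = b ∨ a = c := by
  have := cs.adjacent_of_not_commute_typeA ha
  have := cs.adjacent_of_not_commute_typeA hb
  have := cs.adjacent_of_not_commute_typeA hc
  simp only [Fin.ext_iff] at hbc ⊢
  omega

end TypeA

end CoxeterSystem

namespace DeodharMu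

theorem perm_of_reflTransGen_commMove {ω ω' : List B}
    (h : Relation.ReflTransGen (CommMove M) ω ω') : ω.Perm ω' := by
  induction h with
  | refl => rfl
  | tail _ hmove ih =>
    obtain ⟨l₁, l₂, s, t, -, rfl, rfl⟩ := hmove
    exact ih.trans (by simpa using (List.Perm.swap t s l₂).append_left l₁)

namespace FullyCommutative

section General

variable {cs : CoxeterSystem M W} {w : W}

theorem perm (hfc : FullyCommutative cs w) {ω ω' : List B} (hω : cs.IsReduced ω)
    (hw : cs.wordProd ω = w) (hω' : cs.IsReduced ω') (hw' : cs.wordProd ω' = w) :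
    ω.Perm ω' :=
  perm_of_reflTransGen_commMove (hfc ω ω' hω hw hω' hw')

theorem wordProd_ne_of_braid (hfc : FullyCommutative cs w) {a t : B} (h3 : M a t = 3)
    (l₁ l₂ l₃ l₄ : List B) (h₂ : ∀ b ∈ l₂, Commute (cs.simple a) (cs.simple b))
    (h₃ : ∀ b ∈ l₃, Commute (cs.simple a) (cs.simple b))
    (hred : cs.IsReduced (l₁ ++ a :: (l₂ ++ t :: (l₃ ++ a :: l₄)))) :
    cs.wordProd (l₁ ++ a :: (l₂ ++ t :: (l₃ ++ a :: l₄))) ≠ w := by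
  intro hw
  set ω' := l₁ ++ (l₂ ++ t :: a :: t :: (l₃ ++ l₄))
  have hbraid (x : W) : cs.simple a * (cs.simple t * (cs.simple a * x)) =
      cs.simple t * (cs.simple a * (cs.simple t * x)) := by
    simp only [← mul_assoc, cs.simple_braid_of_M_eq_three h3]
  have hprod : cs.wordProd (l₁ ++ a :: (l₂ ++ t :: (l₃ ++ a :: l₄))) = cs.wordProd ω' := by
    simp only [ω', wordProd_append, wordProd_cons]
    rw [← mul_assoc (cs.wordProd l₃), ← (cs.commute_simple_wordProd h₃).eq,
      ← mul_assoc (cs.simple a), (cs.commute_simple_wordProd h₂).eq]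
    simp only [mul_assoc, hbraid]
  have hred' : cs.IsReduced ω' := by
    rw [CoxeterSystem.IsReduced, ← hprod, hred]
    simp only [ω', List.length_append, List.length_cons]
    omega
  classical
  have hcount := (hfc.perm hred hw hred' (hprod ▸ hw)).count_eq a
  have hta : t ≠ a := by rintro rfl; simp at h3
  simp only [ω', List.count_append, List.count_cons_self, List.count_cons_of_ne hta] at hcount
  omega

theorem exists_two_not_commute_between (hfc : FullyCommutative cs w) {ω : List B}
    (hred : cs.IsReduced ω) (hw : cs.wordProd ω = w) {p q : Fin ω.length} (hpq : p < q)
    (hsame : ω.get p = ω.get q)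
    (h3 : ∀ b, ¬ Commute (cs.simple (ω.get p)) (cs.simple b) → M (ω.get p) b = 3) :
    ∃ r₁ r₂ : Fin ω.length, p < r₁ ∧ r₁ < q ∧ p < r₂ ∧ r₂ < q ∧ r₁ ≠ r₂ ∧
      ¬ Commute (cs.simple (ω.get p)) (cs.simple (ω.get r₁)) ∧
      ¬ Commute (cs.simple (ω.get p)) (cs.simple (ω.get r₂)) := by
  set a := ω.get p
  by_contra! hcon
  have hω : ω = ω.take p ++ a :: ω.drop (p + 1) := by
    conv_lhs => rw [← List.take_append_drop p ω, List.drop_eq_getElem_cons p.isLt]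
    rfl
  by_cases hr : ∃ r : Fin ω.length, p < r ∧ r < q ∧ ¬ Commute (cs.simple a) (cs.simple (ω.get r))
  · obtain ⟨r, hpr, hrq, hnc⟩ := hr
    have hdrop_p : ω.drop (p + 1) =
        (ω.drop (p + 1)).take (r - (p + 1)) ++ ω.get r :: ω.drop (r + 1) :=
      ω.drop_eq_take_append_getElem_cons hpr r.isLt
    have hdrop_r : ω.drop (r + 1) =
        (ω.drop (r + 1)).take (q - (r + 1)) ++ a :: ω.drop (q + 1) := by
      rw [hsame]; exact ω.drop_eq_take_append_getElem_cons hrq q.isLt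
    rw [hdrop_p, hdrop_r] at hω
    rw [hω] at hred hw
    refine hfc.wordProd_ne_of_braid (h3 _ hnc) _ _ _ _ ?_ ?_ hred hw
    all_goals
      exact List.forall_mem_take_drop fun j hij hjk =>
        hcon r j hpr hrq (by omega) (by omega) (by omega) hnc
  · push Not at hr
    have hdrop_p : ω.drop (p + 1) =
        (ω.drop (p + 1)).take (q - (p + 1)) ++ a :: ω.drop (q + 1) := by
      rw [hsame]; exact ω.drop_eq_take_append_getElem_cons hpq q.isLt
    rw [hdrop_p] at hω
    rw [hω] at hred
    exact cs.not_isReduced_of_commute_between _ _ _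
      (List.forall_mem_take_drop fun j hij hjk => hr j (by omega) (by omega)) hred

end General

theorem exists_distinct_not_commute_between_typeA {n : ℕ}
    {cs : CoxeterSystem (CoxeterMatrix.A n) W} {w : W} (hfc : FullyCommutative cs w)
    {ω : List (Fin n)} (hred : cs.IsReduced ω) (hw : cs.wordProd ω = w) {p q : Fin ω.length}
    (hpair : ω.IsMinimalPair p q) :
    ∃ r₁ r₂ : Fin ω.length, p < r₁ ∧ r₁ < q ∧ p < r₂ ∧ r₂ < q ∧ r₁ ≠ r₂ ∧
      ¬ Commute (cs.simple (ω.get p)) (cs.simple (ω.get r₁)) ∧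
      ¬ Commute (cs.simple (ω.get p)) (cs.simple (ω.get r₂)) ∧ ω.get r₁ ≠ ω.get r₂ := by
  induction hd : (q : ℕ) - p using Nat.strong_induction_on generalizing p q with
  | _ d ih =>
  obtain ⟨hpq, hsame, hmin⟩ := hpair
  obtain ⟨r₁, r₂, hpr₁, hr₁q, hpr₂, hr₂q, hne, hnc₁, hnc₂⟩ :=
    hfc.exists_two_not_commute_between hred hw hpq hsame
      fun _ => cs.eq_three_of_not_commute_typeA
  refine ⟨r₁, r₂, hpr₁, hr₁q, hpr₂, hr₂q, hne, hnc₁, hnc₂, fun ht => ?_⟩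
  have false_of_repeat (r r' : Fin ω.length) (hpr : p < r) (hr'q : r' < q) (hrr' : r < r')
      (ht : ω.get r = ω.get r') (hnc : ¬ Commute (cs.simple (ω.get p)) (cs.simple (ω.get r))) :
      False := by
    obtain ⟨i, hri, hij⟩ := ω.exists_isMinimalPair_of_get_eq hrr' ht
    obtain ⟨c, d, hic, hcj, hid, hdj, -, hnc_c, hnc_d, hcd⟩ :=
      ih ((r' : ℕ) - i) (by omega) hij rfl
    rw [hij.2.1, ← ht] at hnc_c hnc_d
    rcases cs.eq_or_eq_of_not_commute_typeA (mt Commute.symm hnc) hnc_c hnc_d hcd with hc | hc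
    · exact hmin c (by omega) (by omega) hc.symm
    · exact hmin d (by omega) (by omega) hc.symm
  rcases lt_or_gt_of_ne hne with h | h
  exacts [false_of_repeat r₁ r₂ hpr₁ hr₂q h ht hnc₁, false_of_repeat r₂ r₁ hpr₂ hr₁q h ht.symm hnc₂]

end FullyCommutative

end DeodharMu

open DeodharMu in
theorem stmt10 {n : ℕ} {W : Type*} [Group W] (cs : CoxeterSystem (CoxeterMatrix.Aₙ n) W)
    (w : W) (hfc : FullyCommutative cs w) (ω : List (Fin n)) (hred : cs.IsReduced ω)
    (hw : cs.wordProd ω = w) (p q : Fin ω.length) (hpq : (p : ℕ) < q)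
    (hsame : ω.get p = ω.get q)
    (hmin : ∀ r : Fin ω.length, (p : ℕ) < r → (r : ℕ) < q → ω.get r ≠ ω.get p) :
    ∃ r₁ r₂ : Fin ω.length, (p : ℕ) < r₁ ∧ (r₁ : ℕ) < q ∧ (p : ℕ) < r₂ ∧ (r₂ : ℕ) < q ∧
      r₁ ≠ r₂ ∧ ¬ Commute (cs.simple (ω.get p)) (cs.simple (ω.get r₁)) ∧
      ¬ Commute (cs.simple (ω.get p)) (cs.simple (ω.get r₂)) ∧
      ω.get r₁ ≠ ω.get r₂ :=
  hfc.exists_distinct_not_commute_between_typeA hred hw ⟨hpq, hsame, hmin⟩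
end
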